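/- arXiv:1401.6390 — 4 statements merged into one kernel-verified Lean document; each statement's English description precedes it below -/
import Mathlib

section
/- Every finite set A of n positive integers contains a k-sum-free subset of size at least n/(k+1). -/
/-!
Take a prime `p = (k² - 1) m + 1` exceeding every element of `A`. In `ZMod p` the arc
`W = {m + 1, …, k m}` plays the role of Erdős's interval: a sum of `k` of its elements lies
in `[k m + k, k² m]`, which modulo `p` misses `W`. Every `a ∈ A` is a unit mod `p`, so exactly
`|W| = (k - 1) m` of the `p - 1 = (k + 1)(k - 1) m` nonzero dilates `x` put `a x` in `W`. Double
counting gives an `x` with `|{a ∈ A | a x ∈ W}| ≥ |A| / (k + 1)`, and this set is `k`-sum-free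
because it is the preimage of `W` under the additive map `a ↦ a x`.
-/

def KSumFreeFinset (k : ℕ) (S : Finset ℕ) : Prop :=
  ¬ ∃ a : Fin k → ℕ, (∀ i, a i ∈ S) ∧ (∑ i, a i) ∈ S

open Finset

def IsKSumFree {G : Type*} [AddCommMonoid G] (k : ℕ) (S : Set G) : Prop :=
  ∀ a : Fin k → G, (∀ i, a i ∈ S) → ∑ i, a i ∉ S

namespace IsKSumFree

variable {G H : Type*} [AddCommMonoid G] [AddCommMonoid H] {k : ℕ} {S T : Set H}

theorem mono (hS : IsKSumFree k S) (hTS : T ⊆ S) : IsKSumFree k T :=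
  fun a ha hsum => hS a (fun i => hTS (ha i)) (hTS hsum)

theorem preimage (hS : IsKSumFree k S) (f : G →+ H) : IsKSumFree k (f ⁻¹' S) :=
  fun a ha hsum => hS (f ∘ a) ha (by simpa [map_sum] using hsum)

end IsKSumFree

theorem kSumFreeFinset_iff_isKSumFree {k : ℕ} {S : Finset ℕ} :
    KSumFreeFinset k S ↔ IsKSumFree k (S : Set ℕ) := by
  simp [KSumFreeFinset, IsKSumFree]

theorem Finset.exists_card_mul_le_card_mul_card_bipartiteBelow {α β : Type*}
    (r : α → β → Prop) [∀ a b, Decidable (r a b)] {s : Finset α} {t : Finset β}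
    (ht : t.Nonempty) {c : ℕ} (hc : ∀ a ∈ s, c ≤ #(t.bipartiteAbove r a)) :
    ∃ b ∈ t, #s * c ≤ #t * #(s.bipartiteBelow r b) := by
  apply exists_le_of_sum_le ht
  calc ∑ _b ∈ t, #s * c = #t * (#s * c) := by rw [sum_const, smul_eq_mul]
    _ ≤ #t * ∑ a ∈ s, #(t.bipartiteAbove r a) := by
      gcongr
      simpa using card_nsmul_le_sum s _ c hc
    _ = ∑ b ∈ t, #t * #(s.bipartiteBelow r b) := by
      rw [sum_card_bipartiteAbove_eq_sum_card_bipartiteBelow, mul_sum]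

theorem card_filter_ne_zero_mul_mem {F : Type*} [GroupWithZero F] [Fintype F] [DecidableEq F]
    {a : F} (ha : a ≠ 0) {W : Finset F} (hW : 0 ∉ W) :
    #{x ∈ univ.erase 0 | a * x ∈ W} = #W := by
  rw [filter_erase, erase_eq_of_notMem (by simpa using hW),
    ← card_map (Equiv.mulLeft₀ a ha).toEmbedding]
  congr 1
  ext y
  simp [mul_inv_cancel_left₀ ha]

theorem exists_prime_gt_eq_mul_add_one (N : ℕ) {q : ℕ} (hq : q ≠ 0) :
    ∃ p m, p.Prime ∧ N < p ∧ p = q * m + 1 := by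
  obtain ⟨p, hp, hNp, hpq⟩ := Nat.exists_prime_gt_modEq_one N hq
  obtain ⟨m, hm⟩ := (Nat.modEq_iff_dvd' hp.one_le).1 hpq.symm
  exact ⟨p, m, hp, hNp, by omega⟩

section Window

variable {k m p : ℕ}

theorem sum_mod_notMem_Icc (hp : p = (k * k - 1) * m + 1) (n : Fin k → ℕ)
    (hn : ∀ i, n i ∈ Set.Icc (m + 1) (k * m)) :
    (∑ i, n i) % p ∉ Set.Icc (m + 1) (k * m) := by
  have hlow : k * (m + 1) ≤ ∑ i, n i := by
    simpa using card_nsmul_le_sum univ n (m + 1) fun i _ => (hn i).1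
  have hhigh : ∑ i, n i ≤ k * k * m := by
    simpa [mul_assoc] using sum_le_card_nsmul univ n (k * m) fun i _ => (hn i).2
  rw [Nat.sub_one_mul] at hp
  rw [mul_add, mul_one] at hlow
  rcases Nat.eq_zero_or_pos k with rfl | hk
  · simp
  rintro ⟨h₁, h₂⟩
  rcases lt_or_ge (∑ i, n i) p with hlt | hge
  · rw [Nat.mod_eq_of_lt hlt] at h₁ h₂
    omega
  · have := (Nat.mod_eq_sub_mod hge).trans_le (Nat.mod_le _ p)
    have : m ≤ k * k * m := Nat.le_mul_of_pos_left m (Nat.mul_pos hk hk)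
    omega

theorem lt_of_mem_Icc_window (hp : p = (k * k - 1) * m + 1) {n : ℕ}
    (hn : n ∈ Set.Icc (m + 1) (k * m)) : n < p := by
  obtain ⟨h₁, h₂⟩ := hn
  have hk : 2 ≤ k := by
    by_contra! hk
    interval_cases k <;> omega
  have hk2 : 2 * k ≤ k * k := Nat.mul_le_mul_right k hk
  have hkm : k * m ≤ (k * k - 1) * m := Nat.mul_le_mul_right m (by omega)
  omega

/-- Scaled by `1 / p` with `p = (k² - 1) m + 1`, the residues `m + 1, …, k m` form an arc of
length about `1 / (k + 1)` centred near `1 / (2k - 2)`: a discretisation of Erdős's interval. -/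
def window (p m k : ℕ) : Finset (ZMod p) :=
  (Finset.Icc (m + 1) (k * m)).image Nat.cast

theorem natCast_mem_window_iff (hp : p = (k * k - 1) * m + 1) {n : ℕ} (hn : n < p) :
    (n : ZMod p) ∈ window p m k ↔ n ∈ Set.Icc (m + 1) (k * m) := by
  refine ⟨fun h => ?_, fun h => mem_image_of_mem _ (by simpa using h)⟩
  obtain ⟨n', hn', hcast⟩ := mem_image.1 h
  rw [ZMod.natCast_eq_natCast_iff', Nat.mod_eq_of_lt hn,
    Nat.mod_eq_of_lt (lt_of_mem_Icc_window hp (by simpa using hn'))] at hcast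
  simpa [← hcast] using hn'

theorem card_window (hp : p = (k * k - 1) * m + 1) : #(window p m k) = (k - 1) * m := by
  rw [window, card_image_of_injOn, Nat.card_Icc, Nat.sub_one_mul]
  · omega
  intro x hx y hy hxy
  rw [ZMod.natCast_eq_natCast_iff', Nat.mod_eq_of_lt (lt_of_mem_Icc_window hp (by simpa using hx)),
    Nat.mod_eq_of_lt (lt_of_mem_Icc_window hp (by simpa using hy))] at hxy
  exact hxy

theorem zero_notMem_window (hp : p = (k * k - 1) * m + 1) : (0 : ZMod p) ∉ window p m k := by
  rw [← Nat.cast_zero, natCast_mem_window_iff hp (by omega)]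
  simp

theorem isKSumFree_window [NeZero p] (hp : p = (k * k - 1) * m + 1) :
    IsKSumFree k (window p m k : Set (ZMod p)) := by
  intro a ha hsum
  choose n hn hna using fun i => mem_image.1 (ha i)
  rw [← funext hna, ← Nat.cast_sum, ← ZMod.natCast_mod, mem_coe,
    natCast_mem_window_iff hp (Nat.mod_lt _ (NeZero.pos p))] at hsum
  exact sum_mod_notMem_Icc hp n (fun i => by simpa using hn i) hsum

theorem card_univ_erase_zero [NeZero p] (hp : p = (k * k - 1) * m + 1) :
    #(univ.erase (0 : ZMod p)) = (k + 1) * ((k - 1) * m) := by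
  rw [card_erase_of_mem (mem_univ _), card_univ, ZMod.card, hp, Nat.add_sub_cancel, ← mul_assoc,
    ← Nat.mul_self_sub_mul_self_eq, one_mul]

end Window

theorem stmt_0 (k : ℕ) (hk : 2 ≤ k) (A : Finset ℕ) (hA : ∀ a ∈ A, 0 < a) :
    ∃ S ⊆ A, KSumFreeFinset k S ∧ (A.card : ℝ) / (k + 1) ≤ S.card := by
  obtain ⟨p, m, hp, hAp, hpm⟩ :=
    exists_prime_gt_eq_mul_add_one (A.sup id) (q := k * k - 1) (Nat.sub_ne_zero_of_lt (by nlinarith))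
  have : Fact p.Prime := ⟨hp⟩
  have hm : 0 < (k - 1) * m := by
    refine Nat.mul_pos (by omega) (Nat.pos_of_ne_zero ?_)
    rintro rfl
    exact Nat.not_prime_one (by simpa [hpm] using hp)
  have hunit (a : ℕ) (ha : a ∈ A) : (a : ZMod p) ≠ 0 := by
    rw [Ne, ZMod.natCast_eq_zero_iff]
    exact Nat.not_dvd_of_pos_of_lt (hA a ha) ((le_sup (f := id) ha).trans_lt hAp)
  obtain ⟨x, -, hx⟩ := exists_card_mul_le_card_mul_card_bipartiteBelow
    (fun (a : ℕ) (x : ZMod p) => (a : ZMod p) * x ∈ window p m k) (s := A)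
    ⟨1, by simp⟩ (c := (k - 1) * m)
    fun a ha => (card_filter_ne_zero_mul_mem (hunit a ha) (zero_notMem_window hpm)).trans
      (card_window hpm) |>.ge
  refine ⟨{a ∈ A | (a : ZMod p) * x ∈ window p m k}, filter_subset _ _, ?_, ?_⟩
  · rw [kSumFreeFinset_iff_isKSumFree]
    refine ((isKSumFree_window hpm).preimage
      ((AddMonoidHom.mulRight x).comp (Nat.castAddMonoidHom _))).mono fun a ha => ?_
    simpa using (mem_filter.1 ha).2
  · rw [card_univ_erase_zero hpm] at hx
    rw [div_le_iff₀ (by positivity)]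
    exact_mod_cast Nat.le_of_mul_le_mul_right (hx.trans_eq (by simp only [bipartiteBelow]; ring)) hm
end

section
/- The open interval S ⊂ ℝ/ℤ of length 1/(k+1) centred at 1/(2k-2) is k-sum-free: there do not exist s_1, ..., s_k ∈ S with s_1 + ... + s_k ∈ S. -/
/-!
Lift the interval to `(a, b) ⊂ ℝ`. Its centre and length are chosen so that `k * a = b` and
`k * b = a + 1`, so a sum of `k` lifts lies in `(b, a + 1)`. For any lift `y ∈ (a, b)` this
window sits inside `(y, y + 1)`, which contains no real congruent to `y` modulo `1`.
-/

def KSumFreeCircle (k : ℕ) (S : Set (AddCircle (1 : ℝ))) : Prop :=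
  ¬ ∃ s : Fin k → AddCircle (1 : ℝ), (∀ i, s i ∈ S) ∧ (∑ i, s i) ∈ S

open Set

theorem Finset.sum_mem_Ioo_nsmul {ι M : Type*} [AddCommMonoid M] [PartialOrder M]
    [IsOrderedCancelAddMonoid M] {s : Finset ι} (hs : s.Nonempty) {f : ι → M} {a b : M}
    (h : ∀ i ∈ s, f i ∈ Set.Ioo a b) : ∑ i ∈ s, f i ∈ Set.Ioo (s.card • a) (s.card • b) := by
  constructor
  · simpa only [Finset.sum_const] using Finset.sum_lt_sum_of_nonempty hs fun i hi => (h i hi).1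
  · simpa only [Finset.sum_const] using Finset.sum_lt_sum_of_nonempty hs fun i hi => (h i hi).2

theorem kSumFreeCircle_image_Ioo {k : ℕ} (hk : k ≠ 0) {a b : ℝ} (ha : b ≤ k * a)
    (hb : k * b ≤ a + 1) :
    KSumFreeCircle k ((fun x : ℝ => (x : AddCircle (1 : ℝ))) '' Ioo a b) := by
  rintro ⟨s, hs, y, hy, hys⟩
  choose x hx hxs using hs
  have : NeZero k := ⟨hk⟩
  have hsum : ∑ i, x i ∈ Ioo (k * a) (k * b) := by
    simpa only [Finset.card_univ, Fintype.card_fin, nsmul_eq_mul] using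
      Finset.sum_mem_Ioo_nsmul Finset.univ_nonempty fun i _ => hx i
  have hcoe : ((∑ i, x i : ℝ) : AddCircle (1 : ℝ)) = y := by
    rw [QuotientAddGroup.mk_sum, Finset.sum_congr rfl fun i _ => hxs i]
    exact hys.symm
  have hy_mem : y ∈ Ico y (y + 1) := ⟨le_rfl, by linarith⟩
  have hsum_mem : ∑ i, x i ∈ Ioo y (y + 1) := by
    constructor <;> linarith [hy.1, hy.2, hsum.1, hsum.2]
  exact hsum_mem.1.ne'
    ((AddCircle.coe_eq_coe_iff_of_mem_Ico (Ioo_subset_Ico_self hsum_mem) hy_mem).mp hcoe)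

theorem stmt_1 (k : ℕ) (hk : 2 ≤ k) :
    KSumFreeCircle k
      ((fun x : ℝ => (x : AddCircle (1 : ℝ))) ''
        Set.Ioo (1 / (2 * (k : ℝ) - 2) - 1 / (2 * ((k : ℝ) + 1)))
                (1 / (2 * (k : ℝ) - 2) + 1 / (2 * ((k : ℝ) + 1)))) := by
  have hk' : (2 : ℝ) ≤ k := by exact_mod_cast hk
  have hk₁ : (k : ℝ) - 1 ≠ 0 := by linarith
  have hk₂ : (k : ℝ) + 1 ≠ 0 := by linarith
  apply kSumFreeCircle_image_Ioo (by omega) <;> apply le_of_eq <;> field_simp <;> ring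
end

section
/- If A ⊆ ℕ has positive upper density on multiples, i.e. limsup_{N→∞} d̄(A/N!) > 0, then for every N, the set A/N! = {a : N!·a ∈ A} contains a multiple of every positive integer, and hence A/N! is not contained in any periodic k-sum-free set. -/
open Filter

def KSumFree (k : ℕ) (A : Set ℕ) : Prop :=
  ¬ ∃ a : Fin k → ℕ, (∀ i, a i ∈ A) ∧ (∑ i, a i) ∈ A

def Periodic' (P : Set ℕ) : Prop :=
  ∃ q : ℕ, 1 ≤ q ∧ ∀ x, x ∈ P ↔ x + q ∈ P

private lemma aux_freq_pos (h : ℕ → ℝ) (h0 : ∀ n, 0 ≤ h n)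
    (hpos : 0 < limsup h atTop) : ∃ᶠ n in atTop, 0 < h n :=
  frequently_lt_of_lt_limsup
    (isCoboundedUnder_le_of_le atTop h0) hpos

private lemma aux_periodic_add (P : Set ℕ) (q : ℕ) (hq : ∀ x, x ∈ P ↔ x + q ∈ P)
    (a : ℕ) (ha : a ∈ P) : ∀ m, a + m * q ∈ P := by
  intro m
  induction m with
  | zero => simpa using ha
  | succ m ih =>
    have := (hq (a + m * q)).1 ih
    have e : a + (m + 1) * q = a + m * q + q := by ring
    rwa [e]

theorem stmt_6 (k : ℕ) (hk : 2 ≤ k) (A : Set ℕ)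
    (hpos : 0 < limsup (fun N : ℕ =>
      limsup (fun n : ℕ =>
        (({a : ℕ | N.factorial * a ∈ A} ∩ Set.Icc 1 n).ncard : ℝ) / n) atTop) atTop)
    (N : ℕ) :
    (∀ q : ℕ, 1 ≤ q → ∃ a : ℕ, 0 < a ∧ q ∣ a ∧ a ∈ {a : ℕ | N.factorial * a ∈ A}) ∧
    (∀ P : Set ℕ, Periodic' P → KSumFree k P →
      ¬ {a : ℕ | N.factorial * a ∈ A} ⊆ P) := by
  set g : ℕ → ℕ → ℝ := fun M n =>
    (({a : ℕ | M.factorial * a ∈ A} ∩ Set.Icc 1 n).ncard : ℝ) / n with hg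
  have g0 : ∀ M n, 0 ≤ g M n := fun M n =>
    div_nonneg (by positivity) (by positivity)
  have f0 : ∀ M, 0 ≤ limsup (g M) atTop := by
    intro M
    refine le_limsup_of_frequently_le (Frequently.of_forall (g0 M)) ?_
    refine isBoundedUnder_of ⟨1, fun (n : ℕ) => ?_⟩
    by_cases hn : n = 0
    · simp [hg, hn]
    · have h1 : (({a : ℕ | M.factorial * a ∈ A} ∩ Set.Icc 1 n).ncard : ℝ) ≤ n := by
        have : ({a : ℕ | M.factorial * a ∈ A} ∩ Set.Icc 1 n).ncard ≤ (Set.Icc 1 n).ncard :=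
          Set.ncard_le_ncard Set.inter_subset_right (Set.finite_Icc 1 n)
        have hcard : (Set.Icc 1 n).ncard = n := by
          simp [Set.ncard_eq_toFinset_card', Set.toFinset_Icc, Nat.card_Icc]
        exact_mod_cast this.trans_eq hcard
      have hn' : (0:ℝ) < n := by exact_mod_cast Nat.pos_of_ne_zero hn
      exact div_le_one_of_le₀ h1 hn'.le
  -- frequently positive outer
  have hfreq : ∃ᶠ M in atTop, 0 < limsup (g M) atTop :=
    aux_freq_pos _ f0 hpos
  -- for each M with positive inner limsup, the set has a positive element
  have key : ∀ M₀ : ℕ, ∃ M ≥ M₀, ∃ a : ℕ, 0 < a ∧ M.factorial * a ∈ A := by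
    intro M₀
    obtain ⟨M, hM, hMpos⟩ := (hfreq.and_eventually (eventually_ge_atTop M₀)).exists
    refine ⟨M, hMpos, ?_⟩
    obtain ⟨n, hn⟩ := (aux_freq_pos _ (g0 M) hM).exists
    have hne : ({a : ℕ | M.factorial * a ∈ A} ∩ Set.Icc 1 n).ncard ≠ 0 := by
      intro h
      rw [hg] at hn
      simp only [h] at hn
      norm_num at hn
    obtain ⟨a, ha⟩ := Set.nonempty_of_ncard_ne_zero hne
    exact ⟨a, lt_of_lt_of_le one_pos ha.2.1, ha.1⟩
  have part1 : ∀ q : ℕ, 1 ≤ q → ∃ a : ℕ, 0 < a ∧ q ∣ a ∧ a ∈ {a : ℕ | N.factorial * a ∈ A} := by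
    intro q hq
    obtain ⟨M, hM, a, ha, haA⟩ := key (N.factorial * q)
    have hdvd : N.factorial * q ∣ M.factorial := by
      have h1 : N.factorial * q ∣ (N.factorial * q).factorial :=
        Nat.dvd_factorial (by positivity) le_rfl
      exact h1.trans (Nat.factorial_dvd_factorial hM)
    obtain ⟨c, hc⟩ := hdvd
    have hb : N.factorial * (q * c * a) = M.factorial * a := by
      rw [hc]; ring
    have hcpos : 0 < c := by
      rcases Nat.eq_zero_or_pos c with h | h
      · exfalso
        have := M.factorial_pos
        rw [hc, h, mul_zero] at this
        exact lt_irrefl 0 this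
      · exact h
    refine ⟨q * c * a, by positivity, ⟨c * a, by ring⟩, ?_⟩
    show N.factorial * (q * c * a) ∈ A
    rw [hb]; exact haA
  refine ⟨part1, ?_⟩
  intro P hP hKSF hsub
  obtain ⟨q, hq1, hqper⟩ := hP
  obtain ⟨a, hapos, ⟨t, ht⟩, haA⟩ := part1 q hq1
  have haP : a ∈ P := hsub haA
  apply hKSF
  refine ⟨fun _ => a, fun _ => haP, ?_⟩
  have hsum : (∑ _i : Fin k, a) = a + (k - 1) * t * q := by
    rw [Finset.sum_const, Finset.card_univ, Fintype.card_fin, smul_eq_mul]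
    have : k * a = a + (k - 1) * a := by
      cases k with
      | zero => omega
      | succ m => simp [Nat.succ_mul, Nat.add_comm]
    rw [this, ht]; ring
  rw [hsum]
  exact aux_periodic_add P q hqper a haP ((k - 1) * t)
end

section
/- Let k ≥ 2 and let A ⊆ ℕ be k-sum-free. Suppose A contains an arithmetic progression x, x+m, ..., x+(i−1)m with all terms ≤ n, and let B = {a ∈ A : a + jm ∈ A for some j ∈ {1,...,i}}. Then the sets A, A+(k−1)x, (A∖B)+(k−1)x+m, ..., (A∖B)+(k−1)x+(i−1)m are pairwise disjoint, and consequently (i+1)|A_n| − (i−1)|B_n| ≤ n + (k−1)x + (i−1)m. -/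
/-!
Since `x ∈ A` and `A` is `k`-sum-free, `a + (x + t * m) + (k - 2) * x ∉ A` for `a ∈ A` and
`t < i`, so `A` misses every copy `A + (k - 1) * x + t * m`. Two later copies
`A + (k - 1) * x + (j₁ - 1) * m` and `(A \ B) + (k - 1) * x + (j₂ - 1) * m` with `j₁ < j₂` can
only meet at a point giving `b + (j₂ - j₁) * m ∈ A` with `b ∈ A \ B`, which the definition of
`B` excludes. Restricted to `A ∩ [1, n]`, the `i + 1` copies are disjoint subsets of
`[1, n + (k - 1) * x + (i - 1) * m]` of sizes `|Aₙ|`, `|Aₙ|` and `i - 1` times `|Aₙ| - |Bₙ|`.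
-/

open Set

lemma Finset.sum_ncard_le_of_pairwiseDisjoint {ι α : Type*} (s : Finset ι) {f : ι → Set α}
    {T : Set α} (hT : T.Finite) (hd : (s : Set ι).PairwiseDisjoint f) (hf : ∀ j ∈ s, f j ⊆ T) :
    ∑ j ∈ s, (f j).ncard ≤ T.ncard := by
  rw [← finsum_mem_coe_finset,
    ← s.finite_toSet.ncard_biUnion (fun j hj ↦ hT.subset (hf j hj)) hd]
  exact ncard_le_ncard (iUnion₂_subset hf) hT

namespace KSumFree

variable {k : ℕ} {A : Set ℕ}

lemma add_add_notMem (hA : KSumFree k A) (hk : 2 ≤ k) {x a c : ℕ} (hx : x ∈ A) (ha : a ∈ A)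
    (hc : c ∈ A) : a + c + (k - 2) * x ∉ A := by
  obtain ⟨k, rfl⟩ := Nat.exists_eq_add_of_le' hk
  intro hmem
  exact hA ⟨Fin.cons a (Fin.cons c fun _ ↦ x),
    fun t ↦ Fin.cases ha (Fin.cases hc fun _ ↦ hx) t,
    by simpa [Fin.sum_cons, mul_comm, ← add_assoc] using hmem⟩

lemma add_sub_one_mul_add_mul_notMem (hA : KSumFree k A) (hk : 2 ≤ k) {x m i a t : ℕ}
    (hAP : ∀ j < i, x + j * m ∈ A) (ha : a ∈ A) (ht : t < i) :
    a + (k - 1) * x + t * m ∉ A := by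
  have hx : x ∈ A := by simpa using hAP 0 (by omega)
  have hsplit : a + (k - 1) * x + t * m = a + (x + t * m) + (k - 2) * x := by
    rw [show k - 1 = k - 2 + 1 by omega]; ring
  rw [hsplit]
  exact hA.add_add_notMem hk hx ha (hAP t ht)

end KSumFree

-- The `j`-th of the sets `A, A + s, (A \ B) + s + m, (A \ B) + s + 2m, …`.
def shiftedCopy (A B : Set ℕ) (s m j : ℕ) : Set ℕ :=
  if j = 0 then A else if j = 1 then (fun a ↦ a + s) '' A
    else (fun a ↦ a + s + (j - 1) * m) '' (A \ B)

namespace shiftedCopy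

variable {A B : Set ℕ} {s m i j : ℕ}

@[simp] lemma zero : shiftedCopy A B s m 0 = A := rfl

lemma of_two_le (hj : 2 ≤ j) :
    shiftedCopy A B s m j = (fun a ↦ a + s + (j - 1) * m) '' (A \ B) := by
  simp [shiftedCopy, show j ≠ 0 by omega, show j ≠ 1 by omega]

lemma subset_image (hj : 1 ≤ j) :
    shiftedCopy A B s m j ⊆ (fun a ↦ a + s + (j - 1) * m) '' A := by
  obtain rfl | hj := eq_or_lt_of_le hj
  · simp [shiftedCopy]
  · rw [of_two_le hj]
    exact image_mono sdiff_subset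

lemma mono {A' : Set ℕ} (hA : A' ⊆ A) : shiftedCopy A' B s m j ⊆ shiftedCopy A B s m j := by
  unfold shiftedCopy
  split_ifs
  exacts [hA, image_mono hA, image_mono (sdiff_subset_sdiff_left hA)]

lemma subset_Icc {n : ℕ} (hA : A ⊆ Icc 1 n) (hj : j ≤ i) :
    shiftedCopy A B s m j ⊆ Icc 1 (n + s + (i - 1) * m) := by
  obtain rfl | hj₀ := Nat.eq_zero_or_pos j
  · exact hA.trans (Icc_subset_Icc_right (by omega))
  rintro _ hy
  obtain ⟨a, ha, rfl⟩ := subset_image hj₀ hy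
  have ha' := hA ha
  have hshift : (j - 1) * m ≤ (i - 1) * m := Nat.mul_le_mul_right m (by omega)
  simp only [mem_Icc] at ha' ⊢
  omega

lemma ncard_add (hA : A.Finite) (j : ℕ) :
    (shiftedCopy A B s m j).ncard + (if 2 ≤ j then (A ∩ B).ncard else 0) = A.ncard := by
  rcases lt_or_ge j 2 with hj | hj
  · interval_cases j
    · simp
    · simp [shiftedCopy, ncard_image_of_injective _ (add_left_injective s)]
  · rw [if_pos hj, of_two_le hj, add_comm,
      ncard_image_of_injective _ fun _ _ h ↦ by simpa using h,
      ncard_inter_add_ncard_sdiff_eq_ncard A B hA]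

lemma sum_ncard_add (hA : A.Finite) (i : ℕ) :
    ∑ j ∈ Finset.range (i + 1), (shiftedCopy A B s m j).ncard + (i - 1) * (A ∩ B).ncard =
      (i + 1) * A.ncard := by
  have hcount : ((Finset.range (i + 1)).filter (2 ≤ ·)).card = i - 1 := by
    rw [show (Finset.range (i + 1)).filter (2 ≤ ·) = Finset.Ico 2 (i + 1) by ext; simp; omega]
    simp
  rw [← hcount, ← smul_eq_mul, ← Finset.sum_const, Finset.sum_filter, ← Finset.sum_add_distrib]
  simp [ncard_add hA]

lemma disjoint_of_lt (h₀ : ∀ a ∈ A, ∀ t < i, a + s + t * m ∉ A)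
    (hB : ∀ b ∈ A \ B, ∀ j, 1 ≤ j → j ≤ i → b + j * m ∉ A) {j₁ j₂ : ℕ} (hlt : j₁ < j₂)
    (h₂ : j₂ ≤ i) : Disjoint (shiftedCopy A B s m j₁) (shiftedCopy A B s m j₂) := by
  rw [disjoint_left]
  rintro _ hy₁ hy₂
  obtain rfl | hj₁ := Nat.eq_zero_or_pos j₁
  · obtain ⟨b, hb, rfl⟩ := subset_image (by omega) hy₂
    exact h₀ b hb (j₂ - 1) (by omega) hy₁
  obtain ⟨a, ha, rfl⟩ := subset_image hj₁ hy₁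
  rw [of_two_le (by omega)] at hy₂
  obtain ⟨b, hb, hba⟩ := hy₂
  have hsplit : (j₂ - 1) * m = (j₁ - 1) * m + (j₂ - j₁) * m := by
    rw [← add_mul]; congr 1; omega
  have hab : a = b + (j₂ - j₁) * m := by simp only [hsplit] at hba; omega
  exact hB b hb (j₂ - j₁) (by omega) (by omega) (hab ▸ ha)

lemma pairwiseDisjoint (h₀ : ∀ a ∈ A, ∀ t < i, a + s + t * m ∉ A)
    (hB : ∀ b ∈ A \ B, ∀ j, 1 ≤ j → j ≤ i → b + j * m ∉ A) :
    (Iic i).PairwiseDisjoint (shiftedCopy A B s m) := by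
  intro j₁ h₁ j₂ h₂ hne
  rcases hne.lt_or_gt with hlt | hlt
  · exact disjoint_of_lt h₀ hB hlt h₂
  · exact (disjoint_of_lt h₀ hB hlt h₁).symm

lemma sum_ncard_inter_Icc_le (hd : (Iic i).PairwiseDisjoint (shiftedCopy A B s m)) (n : ℕ) :
    ∑ j ∈ Finset.range (i + 1), (shiftedCopy (A ∩ Icc 1 n) B s m j).ncard ≤
      n + s + (i - 1) * m := by
  have hrange : ∀ j ∈ Finset.range (i + 1), j ≤ i := fun j hj ↦
    Nat.lt_succ_iff.mp (Finset.mem_range.mp hj)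
  calc _ ≤ (Icc 1 (n + s + (i - 1) * m)).ncard :=
        Finset.sum_ncard_le_of_pairwiseDisjoint _ (finite_Icc _ _)
          ((hd.mono fun _ ↦ mono inter_subset_left).subset hrange)
          fun j hj ↦ subset_Icc inter_subset_right (hrange j hj)
    _ = n + s + (i - 1) * m := by simp

end shiftedCopy

theorem stmt_8_general (k i : ℕ) (hk : 2 ≤ k)
    (A : Set ℕ) (hA : KSumFree k A)
    (x m n : ℕ)
    (hAP : ∀ j < i, x + j * m ∈ A ∧ x + j * m ≤ n) :
    ∀ B : Set ℕ, B = {a ∈ A | ∃ j, 1 ≤ j ∧ j ≤ i ∧ a + j * m ∈ A} →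
    (∀ j₁ j₂, j₁ ≤ i → j₂ ≤ i → j₁ ≠ j₂ →
      Disjoint
        (if j₁ = 0 then A else if j₁ = 1 then (fun a => a + (k - 1) * x) '' A
          else (fun a => a + (k - 1) * x + (j₁ - 1) * m) '' (A \ B))
        (if j₂ = 0 then A else if j₂ = 1 then (fun a => a + (k - 1) * x) '' A
          else (fun a => a + (k - 1) * x + (j₂ - 1) * m) '' (A \ B))) ∧
    (i + 1) * (A ∩ Set.Icc 1 n).ncard ≤
      (i - 1) * (B ∩ Set.Icc 1 n).ncard + n + (k - 1) * x + (i - 1) * m := by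
  intro B hB
  have hdisj : (Iic i).PairwiseDisjoint (shiftedCopy A B ((k - 1) * x) m) :=
    shiftedCopy.pairwiseDisjoint
      (fun a ha t ht ↦ hA.add_sub_one_mul_add_mul_notMem hk (fun j hj ↦ (hAP j hj).1) ha ht)
      (fun b hb j hj₁ hj₂ hmem ↦ hb.2 (hB ▸ ⟨hb.1, j, hj₁, hj₂, hmem⟩))
  refine ⟨fun j₁ j₂ h₁ h₂ hne ↦ hdisj h₁ h₂ hne, ?_⟩
  have hAₙ : (A ∩ Icc 1 n).Finite := (finite_Icc 1 n).inter_of_right A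
  have hBA : B ⊆ A := hB ▸ sep_subset A _
  have hBₙ : A ∩ Icc 1 n ∩ B = B ∩ Icc 1 n := by
    rw [inter_right_comm, inter_eq_right.2 hBA]
  have hsum := shiftedCopy.sum_ncard_inter_Icc_le hdisj n
  have hcount := shiftedCopy.sum_ncard_add (B := B) (s := (k - 1) * x) (m := m) hAₙ i
  rw [hBₙ] at hcount
  omega

theorem stmt_8 (k i : ℕ) (hk : 2 ≤ k) (hi : 1 ≤ i)
    (A : Set ℕ) (hpos : ∀ a ∈ A, 0 < a) (hA : KSumFree k A)
    (x m n : ℕ) (hm : 1 ≤ m)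
    (hAP : ∀ j < i, x + j * m ∈ A ∧ x + j * m ≤ n) :
    ∀ B : Set ℕ, B = {a ∈ A | ∃ j, 1 ≤ j ∧ j ≤ i ∧ a + j * m ∈ A} →
    (∀ j₁ j₂, j₁ ≤ i → j₂ ≤ i → j₁ ≠ j₂ →
      Disjoint
        (if j₁ = 0 then A else if j₁ = 1 then (fun a => a + (k - 1) * x) '' A
          else (fun a => a + (k - 1) * x + (j₁ - 1) * m) '' (A \ B))
        (if j₂ = 0 then A else if j₂ = 1 then (fun a => a + (k - 1) * x) '' A
          else (fun a => a + (k - 1) * x + (j₂ - 1) * m) '' (A \ B))) ∧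
    (i + 1) * (A ∩ Set.Icc 1 n).ncard ≤
      (i - 1) * (B ∩ Set.Icc 1 n).ncard + n + (k - 1) * x + (i - 1) * m :=
  stmt_8_general k i hk A hA x m n hAP
end
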